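/- Let S be a finite set, P : S × S → [0,1] a stochastic matrix, s ∈ S, and H ⊆ S^+ a set of nonempty finite words over S such that every word in H has last letter s. If μ_s({x ∈ S^ω : some nonempty finite prefix of x belongs to H}) = 1, then for every n ≥ 1, μ_s({x ∈ S^ω : some finite prefix of x is a concatenation of n words from H}) = 1. -/

import Mathlib

/-- The probability of the path `s, w₁, w₂, …, wₙ` in a Markov chain with
transition matrix `P`: the product `P(s,w₁) ⬝ P(w₁,w₂) ⋯ P(wₙ₋₁,wₙ)`. -/
def pathProb {S : Type*} (P : S → S → ℝ) : S → List S → ℝ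
  | _, [] => 1
  | s, t :: w => P s t * pathProb P t w

/-- The length-`n` prefix of an infinite word. -/
def prefixList {S : Type*} (x : ℕ → S) (n : ℕ) : List S :=
  List.ofFn fun i : Fin n => x i

/-- `μ` is the law `μ_s` of the trajectory of the Markov chain `P` started according
to `P(s,·)`: the measure of every cylinder is the corresponding path probability. -/
def IsMarkovLaw {S : Type*} [MeasurableSpace S]
    (P : S → S → ℝ) (s : S) (μ : MeasureTheory.Measure (ℕ → S)) : Prop :=
  ∀ w : List S, μ { x : ℕ → S | prefixList x w.length = w } = ENNReal.ofReal (pathProb P s w)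

/-!
Every word of `H` ends at `s`, hence so does every concatenation `v` of words of `H`. By the
Markov property, on the cylinder of `v` the shifted trajectory is again distributed as `μ_s`
(up to the mass of the cylinder), so almost surely, whenever `x` begins with such a `v`, the rest
of `x` again begins with a word of `H`. As there are only countably many words, induction on `n`
extends almost every `n`-fold concatenation prefix to an `(n+1)`-fold one.
-/

open MeasureTheory Set

section Words

variable {S : Type*}

@[simp]
theorem prefixList_length (x : ℕ → S) (n : ℕ) : (prefixList x n).length = n := by
  simp [prefixList]

def shiftSeq (n : ℕ) (x : ℕ → S) : ℕ → S := fun i => x (i + n)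

theorem prefixList_add (x : ℕ → S) (m k : ℕ) :
    prefixList x (m + k) = prefixList x m ++ prefixList (shiftSeq m x) k := by
  simp only [prefixList, shiftSeq, List.ofFn_add]
  congr 1; all_goals exact congrArg List.ofFn (funext fun i => by simp [add_comm])

theorem prefixList_succ (x : ℕ → S) (n : ℕ) :
    prefixList x (n + 1) = prefixList x n ++ [x n] := by
  rw [prefixList_add]
  simp [prefixList, shiftSeq]

theorem prefixList_take (x : ℕ → S) {m n : ℕ} (h : m ≤ n) :
    (prefixList x n).take m = prefixList x m := by
  obtain ⟨k, rfl⟩ := Nat.exists_eq_add_of_le h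
  rw [prefixList_add]
  exact List.take_left' (prefixList_length x m)

def wordCylinder (w : List S) : Set (ℕ → S) := {x | prefixList x w.length = w}

theorem wordCylinder_inter_preimage_shiftSeq (v w : List S) :
    wordCylinder v ∩ shiftSeq v.length ⁻¹' wordCylinder w = wordCylinder (v ++ w) := by
  ext x
  simp only [wordCylinder, mem_inter_iff, mem_preimage, mem_ofPred_eq, List.length_append,
    prefixList_add]
  constructor
  · rintro ⟨hv, hw⟩
    rw [hv, hw]
  · intro h
    exact List.append_inj h (prefixList_length x _)

theorem wordCylinder_subset_of_mem_inter {v w : List S} {x : ℕ → S}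
    (hvw : v.length ≤ w.length) (hx : x ∈ wordCylinder v ∩ wordCylinder w) :
    wordCylinder w ⊆ wordCylinder v := by
  intro y (hy : prefixList y w.length = w)
  calc prefixList y v.length = w.take v.length := by rw [← hy, prefixList_take y hvw]
    _ = v := by rw [← hx.2, prefixList_take x hvw, hx.1]

theorem isPiSystem_wordCylinder : IsPiSystem (range (wordCylinder (S := S))) := by
  rintro _ ⟨v, rfl⟩ _ ⟨w, rfl⟩ ⟨x, hx⟩
  rcases le_total v.length w.length with hvw | hwv
  · rw [inter_eq_right.mpr (wordCylinder_subset_of_mem_inter hvw hx)]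
    exact mem_range_self w
  · rw [inter_comm] at hx ⊢
    rw [inter_eq_right.mpr (wordCylinder_subset_of_mem_inter hwv hx)]
    exact mem_range_self v

theorem List.getLastD_append (l l' : List S) (a : S) :
    (l ++ l').getLastD a = l'.getLastD (l.getLastD a) := by
  simp [List.getLastD_eq_getLast?, List.getLast?_append, Option.getD_or]

theorem List.getLastD_flatten_of_forall {s : S} {ws : List (List S)}
    (h : ∀ w ∈ ws, w.getLastD s = s) : ws.flatten.getLastD s = s := by
  induction ws with
  | nil => rfl
  | cons w ws ih =>
    rw [List.flatten_cons, List.getLastD_append, h w List.mem_cons_self]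
    exact ih fun w' hw' => h w' (List.mem_cons_of_mem w hw')

end Words

section Measurability

variable {S : Type*} [MeasurableSpace S]

theorem measurable_shiftSeq (n : ℕ) : Measurable (shiftSeq (S := S) n) :=
  measurable_pi_lambda _ fun i => measurable_pi_apply (i + n)

variable [Countable S] [MeasurableSingletonClass S]

theorem measurableSet_prefixList_mem (k : ℕ) (W : Set (List S)) :
    MeasurableSet {x : ℕ → S | prefixList x k ∈ W} :=
  (measurable_pi_lambda (fun (x : ℕ → S) (i : Fin k) => x i)
      fun i => measurable_pi_apply (i : ℕ))
    (Set.to_countable {u : Fin k → S | List.ofFn u ∈ W}).measurableSet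

theorem measurableSet_wordCylinder (w : List S) : MeasurableSet (wordCylinder w) :=
  measurableSet_prefixList_mem w.length {w}

theorem generateFrom_wordCylinder :
    MeasurableSpace.generateFrom (range (wordCylinder (S := S))) = MeasurableSpace.pi := by
  refine le_antisymm (MeasurableSpace.generateFrom_le ?_) (iSup_le fun i => ?_)
  · rintro _ ⟨w, rfl⟩
    exact measurableSet_wordCylinder w
  refine Measurable.comap_le (@measurable_to_countable' S (ℕ → S) _ _
    (MeasurableSpace.generateFrom _) _ fun t => ?_)
  have hrep : (fun x : ℕ → S => x i) ⁻¹' {t} = ⋃ (v : List S) (_ : v.length = i),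
      wordCylinder (v ++ [t]) := by
    ext x
    simp only [mem_preimage, mem_singleton_iff, mem_iUnion, wordCylinder, mem_ofPred_eq,
      List.length_append, List.length_singleton, exists_prop]
    constructor
    · rintro rfl
      exact ⟨prefixList x i, prefixList_length x i, by rw [prefixList_length, prefixList_succ]⟩
    · rintro ⟨v, rfl, hv⟩
      rw [prefixList_succ] at hv
      simpa using (List.append_inj hv (prefixList_length x _)).2
  rw [hrep]
  exact MeasurableSet.iUnion fun v => MeasurableSet.iUnion fun _ =>
    MeasurableSpace.measurableSet_generateFrom (mem_range_self _)

end Measurability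

section PathProb

variable {S : Type*} {P : S → S → ℝ}

theorem pathProb_nonneg (hP0 : ∀ s t, 0 ≤ P s t) (s : S) (w : List S) :
    0 ≤ pathProb P s w := by
  induction w generalizing s with
  | nil => exact zero_le_one
  | cons t w ih => exact mul_nonneg (hP0 s t) (ih t)

theorem pathProb_append (s : S) (v w : List S) :
    pathProb P s (v ++ w) = pathProb P s v * pathProb P (v.getLastD s) w := by
  induction v generalizing s with
  | nil => simp [pathProb]
  | cons t v ih => simp only [List.cons_append, pathProb, ih, List.getLastD_cons, mul_assoc]

end PathProb

namespace IsMarkovLaw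

variable {S : Type*} [MeasurableSpace S] {P : S → S → ℝ} {s : S} {μ : Measure (ℕ → S)}

theorem isProbabilityMeasure (hμ : IsMarkovLaw P s μ) : IsProbabilityMeasure μ := by
  have h := hμ []
  simp only [List.length_nil, pathProb, ENNReal.ofReal_one] at h
  exact ⟨by simpa [prefixList] using h⟩

variable [Countable S] [MeasurableSingletonClass S]

/-- Markov property: the path `s v` ends at `s` (`v = []` allowed), so the chain restarts there. -/
theorem map_shiftSeq_restrict_wordCylinder (hμ : IsMarkovLaw P s μ) (hP0 : ∀ s t, 0 ≤ P s t)
    {v : List S} (hv : v.getLastD s = s) :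
    (μ.restrict (wordCylinder v)).map (shiftSeq v.length) =
      ENNReal.ofReal (pathProb P s v) • μ := by
  have := hμ.isProbabilityMeasure
  have hmap : ∀ {C : Set (ℕ → S)}, MeasurableSet C →
      (μ.restrict (wordCylinder v)).map (shiftSeq v.length) C =
        μ (wordCylinder v ∩ shiftSeq v.length ⁻¹' C) := fun hC => by
    rw [Measure.map_apply (measurable_shiftSeq _) hC,
      Measure.restrict_apply (measurable_shiftSeq _ hC), inter_comm]
  refine ext_of_generate_finite _ generateFrom_wordCylinder.symm isPiSystem_wordCylinder ?_ ?_
  · rintro _ ⟨w, rfl⟩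
    rw [hmap (measurableSet_wordCylinder w), wordCylinder_inter_preimage_shiftSeq,
      Measure.smul_apply, smul_eq_mul, wordCylinder, wordCylinder, hμ, hμ, pathProb_append, hv,
      ENNReal.ofReal_mul (pathProb_nonneg hP0 s v)]
  · rw [hmap MeasurableSet.univ, preimage_univ, inter_univ, Measure.smul_apply, measure_univ,
      smul_eq_mul, mul_one]
    exact hμ v

theorem ae_shiftSeq_of_ae (hμ : IsMarkovLaw P s μ) (hP0 : ∀ s t, 0 ≤ P s t)
    {v : List S} (hv : v.getLastD s = s) {p : (ℕ → S) → Prop} (h : ∀ᵐ x ∂μ, p x) :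
    ∀ᵐ x ∂μ, x ∈ wordCylinder v → p (shiftSeq v.length x) := by
  have h' : ∀ᵐ y ∂(μ.restrict (wordCylinder v)).map (shiftSeq v.length), p y := by
    rw [hμ.map_shiftSeq_restrict_wordCylinder hP0 hv]
    exact Measure.ae_smul_measure h _
  exact (ae_restrict_iff' (measurableSet_wordCylinder v)).mp
    (ae_of_ae_map (measurable_shiftSeq _).aemeasurable h')

theorem ae_exists_prefixList_eq_flatten (hμ : IsMarkovLaw P s μ) (hP0 : ∀ s t, 0 ≤ P s t)
    {H : Set (List S)} (hH : ∀ w ∈ H, w.getLastD s = s)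
    (hhit : ∀ᵐ x ∂μ, ∃ k, prefixList x k ∈ H) (n : ℕ) :
    ∀ᵐ x ∂μ, ∃ ws : List (List S), ws.length = n ∧ (∀ w ∈ ws, w ∈ H) ∧
      ∃ k, prefixList x k = ws.flatten := by
  induction n with
  | zero => exact ae_of_all _ fun x => ⟨[], rfl, by simp, 0, rfl⟩
  | succ n ih =>
    have hrenew : ∀ᵐ x ∂μ, ∀ v : List S, v.getLastD s = s → x ∈ wordCylinder v →
        ∃ k, prefixList (shiftSeq v.length x) k ∈ H := by
      refine ae_all_iff.mpr fun v => ?_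
      by_cases hv : v.getLastD s = s
      · filter_upwards [hμ.ae_shiftSeq_of_ae hP0 hv hhit] with x hx _ using hx
      · exact ae_of_all _ fun x hv' => absurd hv' hv
    filter_upwards [ih, hrenew] with x ⟨ws, hlen, hws, k, hk⟩ hx
    have hkv : k = ws.flatten.length := by rw [← hk, prefixList_length]
    subst hkv
    obtain ⟨k', hk'⟩ := hx ws.flatten
      (List.getLastD_flatten_of_forall fun w hw => hH w (hws w hw)) hk
    refine ⟨ws ++ [prefixList (shiftSeq ws.flatten.length x) k'], by simp [hlen], ?_,
      ws.flatten.length + k', ?_⟩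
    · simp only [List.mem_append, List.mem_singleton, or_imp, forall_and, forall_eq]
      exact ⟨hws, hk'⟩
    · rw [prefixList_add, hk, List.flatten_append, List.flatten_singleton]

end IsMarkovLaw

theorem stmt8_general {S : Type*} [Fintype S] [MeasurableSpace S] [MeasurableSingletonClass S]
    (P : S → S → ℝ) (hP0 : ∀ s t, 0 ≤ P s t)
    (s : S) (μ : MeasureTheory.Measure (ℕ → S)) (hμ : IsMarkovLaw P s μ)
    (H : Set (List S)) (hH : ∀ w ∈ H, w.getLast? = some s)
    (hone : μ { x : ℕ → S | ∃ k > 0, prefixList x k ∈ H } = 1) :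
    ∀ n ≥ 1, μ { x : ℕ → S | ∃ ws : List (List S), ws.length = n ∧
        (∀ w ∈ ws, w ∈ H) ∧ ∃ k, prefixList x k = ws.flatten } = 1 := by
  have := hμ.isProbabilityMeasure
  have hmeas : MeasurableSet {x : ℕ → S | ∃ k > 0, prefixList x k ∈ H} := by
    simp only [ofPred_exists, ofPred_and]
    exact MeasurableSet.iUnion fun k =>
      (MeasurableSet.const _).inter (measurableSet_prefixList_mem k H)
  have hhit : ∀ᵐ x ∂μ, ∃ k, prefixList x k ∈ H := by
    filter_upwards [(mem_ae_iff_prob_eq_one hmeas).mpr hone] with x ⟨k, _, hk⟩ using ⟨k, hk⟩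
  have hH' : ∀ w ∈ H, w.getLastD s = s := fun w hw => by
    rw [List.getLastD_eq_getLast?, hH w hw, Option.getD_some]
  intro n _
  exact (measure_congr (ae_eq_univ.mpr (mem_ae_iff.mp
    (hμ.ae_exists_prefixList_eq_flatten hP0 hH' hhit n)))).trans measure_univ

theorem stmt8 {S : Type*} [Fintype S] [MeasurableSpace S] [MeasurableSingletonClass S]
    (P : S → S → ℝ) (hP0 : ∀ s t, 0 ≤ P s t) (hP1 : ∀ s, ∑ t, P s t = 1)
    (s : S) (μ : MeasureTheory.Measure (ℕ → S)) (hμ : IsMarkovLaw P s μ)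
    (H : Set (List S)) (hH : ∀ w ∈ H, w.getLast? = some s)
    (hone : μ { x : ℕ → S | ∃ k > 0, prefixList x k ∈ H } = 1) :
    ∀ n ≥ 1, μ { x : ℕ → S | ∃ ws : List (List S), ws.length = n ∧
        (∀ w ∈ ws, w ∈ H) ∧ ∃ k, prefixList x k = ws.flatten } = 1 :=
  stmt8_general P hP0 s μ hμ H hH hone
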